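/- For every object V of R, the map sending f ∈ End_C(E(V)) to f₁₁ ⊗ 1 + f₁₂ ⊗ i, where f_{ij} := π_j∘f∘ε_i ∈ End_R(V), is an isomorphism of ℂ-algebras End_C(E(V)) ≅ End_R(V) ⊗_ℝ ℂ. -/

import Mathlib

set_option linter.unusedSectionVars false

open CategoryTheory CategoryTheory.Limits

universe v u

variable (R : Type u) [Category.{v} R] [Abelian R] [CategoryTheory.Linear ℝ R]

/-- Objects of the category `C`: pairs `(V, ι)` with `ι ∘ ι = -1`. -/
structure CObj : Type max u v where
  V : R
  ι : V ⟶ V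
  hι : ι ≫ ι = -𝟙 V

variable {R}

instance : Category.{v} (CObj R) where
  Hom W₁ W₂ := { φ : W₁.V ⟶ W₂.V // W₁.ι ≫ φ = φ ≫ W₂.ι }
  id W := ⟨𝟙 W.V, by simp⟩
  comp f g := ⟨f.1 ≫ g.1, by
    rw [← Category.assoc, f.2, Category.assoc, g.2, Category.assoc]⟩
  id_comp f := Subtype.ext (Category.id_comp f.1)
  comp_id f := Subtype.ext (Category.comp_id f.1)
  assoc f g h := Subtype.ext (Category.assoc f.1 g.1 h.1)

@[ext]
lemma CObj.hom_ext {W₁ W₂ : CObj R} {f g : W₁ ⟶ W₂} (h : f.1 = g.1) : f = g :=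
  Subtype.ext h

@[simp]
lemma CObj.id_coe (W : CObj R) : (𝟙 W : W ⟶ W).1 = 𝟙 W.V := rfl

@[simp]
lemma CObj.comp_coe {W₁ W₂ W₃ : CObj R} (f : W₁ ⟶ W₂) (g : W₂ ⟶ W₃) :
    (f ≫ g).1 = f.1 ≫ g.1 := rfl

instance (W₁ W₂ : CObj R) : Zero (W₁ ⟶ W₂) := ⟨⟨0, by simp⟩⟩

instance (W₁ W₂ : CObj R) : Add (W₁ ⟶ W₂) :=
  ⟨fun f g => ⟨f.1 + g.1, by rw [Preadditive.comp_add, Preadditive.add_comp, f.2, g.2]⟩⟩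

instance (W₁ W₂ : CObj R) : Neg (W₁ ⟶ W₂) :=
  ⟨fun f => ⟨-f.1, by rw [Preadditive.comp_neg, Preadditive.neg_comp, f.2]⟩⟩

instance (W₁ W₂ : CObj R) : Sub (W₁ ⟶ W₂) :=
  ⟨fun f g => ⟨f.1 - g.1, by rw [Preadditive.comp_sub, Preadditive.sub_comp, f.2, g.2]⟩⟩

instance (W₁ W₂ : CObj R) : SMul ℕ (W₁ ⟶ W₂) :=
  ⟨fun n f => ⟨n • f.1, by rw [Linear.comp_smul, Linear.smul_comp, f.2]⟩⟩

instance (W₁ W₂ : CObj R) : SMul ℤ (W₁ ⟶ W₂) :=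
  ⟨fun n f => ⟨n • f.1, by rw [Linear.comp_smul, Linear.smul_comp, f.2]⟩⟩

@[simp] lemma CObj.zero_coe (W₁ W₂ : CObj R) : (0 : W₁ ⟶ W₂).1 = 0 := rfl
@[simp] lemma CObj.add_coe {W₁ W₂ : CObj R} (f g : W₁ ⟶ W₂) : (f + g).1 = f.1 + g.1 := rfl
@[simp] lemma CObj.neg_coe {W₁ W₂ : CObj R} (f : W₁ ⟶ W₂) : (-f).1 = -f.1 := rfl

instance (W₁ W₂ : CObj R) : AddCommGroup (W₁ ⟶ W₂) :=
  Function.Injective.addCommGroup (fun f : W₁ ⟶ W₂ => f.1) Subtype.val_injective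
    rfl (fun _ _ => rfl) (fun _ => rfl) (fun _ _ => rfl) (fun _ _ => rfl) (fun _ _ => rfl)

instance : Preadditive (CObj R) where
  add_comp P Q S f f' g := by apply Subtype.ext; exact Preadditive.add_comp _ _ _ f.1 f'.1 g.1
  comp_add P Q S f g g' := by apply Subtype.ext; exact Preadditive.comp_add _ _ _ f.1 g.1 g'.1

variable (R)

/-- The conjugation functor `B : C → C`. -/
def Bfunctor : CObj R ⥤ CObj R where
  obj W := ⟨W.V, -W.ι, by simp [W.hι]⟩
  map f := ⟨f.1, by simp [f.2]⟩
  map_id _ := rfl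
  map_comp _ _ := rfl

/-- The forgetful functor `F : C → R`. -/
def Ffunctor : CObj R ⥤ R where
  obj W := W.V
  map f := f.1
  map_id _ := rfl
  map_comp _ _ := rfl

/-- The complexification functor `E : R → C`. -/
noncomputable def Efunctor : R ⥤ CObj R where
  obj V :=
    { V := V ⊞ V
      ι := -(biprod.snd ≫ biprod.inl) + biprod.fst ≫ biprod.inr
      hι := by ext <;> simp }
  map φ := ⟨biprod.map φ φ, by ext <;> simp⟩
  map_id V := Subtype.ext (by ext <;> simp)
  map_comp f g := Subtype.ext (by ext <;> simp)

variable {R}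

/-- The biproduct `(V₁ ⊕ V₂, ι₁ ⊕ ι₂)` of two objects of `C`. -/
noncomputable def csum (W₁ W₂ : CObj R) : CObj R where
  V := W₁.V ⊞ W₂.V
  ι := biprod.map W₁.ι W₂.ι
  hι := by ext <;> simp [W₁.hι, W₂.hι]

/-- Multiplication by `i` as a morphism in `C`. -/
def iMor (W : CObj R) : W ⟶ W := ⟨W.ι, rfl⟩

open scoped TensorProduct Quaternion

/-! An endomorphism of `E V = (V ⊞ V, J)` commutes with `J = [[0, 1], [-1, 0]]` (matrix entries
`m_{ij} = π_j ∘ m ∘ ε_i`), which forces its matrix to be `[[a, b], [-b, a]]`, where `(a, b)` is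
its first row; so it is `E a + E b ≫ i` and is determined by `(a, b)`. Composing two such
matrices multiplies first rows like complex numbers `a + b i`, which is the multiplication of
`a ⊗ 1 + b ⊗ i` in `End V ⊗[ℝ] ℂ`; and `(a, b) ↦ a ⊗ 1 + b ⊗ i` is bijective because `1, i` is
an `ℝ`-basis of `ℂ`. -/

noncomputable def prodEquivTensorComplex (M : Type*) [AddCommGroup M] [Module ℝ M] :
    (M × M) ≃ₗ[ℝ] M ⊗[ℝ] ℂ :=
  (LinearEquiv.finTwoArrow ℝ M).symm ≪≫ₗ (Finsupp.linearEquivFunOnFinite ℝ M (Fin 2)).symm ≪≫ₗ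
    (TensorProduct.equivFinsuppOfBasisRight Complex.basisOneI).symm

@[simp]
lemma prodEquivTensorComplex_apply (M : Type*) [AddCommGroup M] [Module ℝ M] (p : M × M) :
    prodEquivTensorComplex M p = p.1 ⊗ₜ 1 + p.2 ⊗ₜ Complex.I := by
  simp [prodEquivTensorComplex, Finsupp.sum_fintype]

lemma tmul_one_add_tmul_I_mul {A : Type*} [Ring A] [Algebra ℝ A] (a b c d : A) :
    (a ⊗ₜ[ℝ] (1 : ℂ) + b ⊗ₜ Complex.I) * (c ⊗ₜ 1 + d ⊗ₜ Complex.I) =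
      (a * c - b * d) ⊗ₜ 1 + (a * d + b * c) ⊗ₜ Complex.I := by
  simp only [add_mul, mul_add, Algebra.TensorProduct.tmul_mul_tmul, mul_one, one_mul,
    Complex.I_mul_I, TensorProduct.tmul_neg, TensorProduct.sub_tmul, TensorProduct.add_tmul]
  abel

section Complexification

variable {V : R}

variable (V) in
noncomputable def biprodJ : V ⊞ V ⟶ V ⊞ V := -(biprod.snd ≫ biprod.inl) + biprod.fst ≫ biprod.inr

variable (V) in
noncomputable def biprodFirstRow : (V ⊞ V ⟶ V ⊞ V) →+ End V × End V where
  toFun m := (biprod.inl ≫ m ≫ biprod.fst, biprod.inl ≫ m ≫ biprod.snd)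
  map_zero' := by simp
  map_add' m n := by simp

@[simp]
lemma biprodFirstRow_apply (m : V ⊞ V ⟶ V ⊞ V) :
    biprodFirstRow V m = (biprod.inl ≫ m ≫ biprod.fst, biprod.inl ≫ m ≫ biprod.snd) := rfl

lemma biprodFirstRow_comp_biprodJ (m : V ⊞ V ⟶ V ⊞ V) :
    biprodFirstRow V (m ≫ biprodJ V) = (-(biprodFirstRow V m).2, (biprodFirstRow V m).1) := by
  simp [biprodJ]

section Commute

variable {m : V ⊞ V ⟶ V ⊞ V}

lemma inr_comp_fst_of_commute (h : biprodJ V ≫ m = m ≫ biprodJ V) :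
    biprod.inr ≫ m ≫ biprod.fst = -(biprod.inl ≫ m ≫ biprod.snd) := by
  simpa [biprodJ] using congr(biprod.inl ≫ $h ≫ biprod.fst)

lemma inr_comp_snd_of_commute (h : biprodJ V ≫ m = m ≫ biprodJ V) :
    biprod.inr ≫ m ≫ biprod.snd = biprod.inl ≫ m ≫ biprod.fst := by
  simpa [biprodJ] using congr(biprod.inl ≫ $h ≫ biprod.snd)

lemma comp_fst_of_commute (h : biprodJ V ≫ m = m ≫ biprodJ V) {X : R} (x : X ⟶ V ⊞ V) :
    x ≫ m ≫ biprod.fst = (x ≫ biprod.fst) ≫ (biprod.inl ≫ m ≫ biprod.fst)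
      - (x ≫ biprod.snd) ≫ (biprod.inl ≫ m ≫ biprod.snd) := by
  conv_lhs => rw [← Category.comp_id x, ← biprod.total]
  simp only [Preadditive.comp_add, Preadditive.add_comp, Category.assoc,
    inr_comp_fst_of_commute h, Preadditive.comp_neg, sub_eq_add_neg]

lemma comp_snd_of_commute (h : biprodJ V ≫ m = m ≫ biprodJ V) {X : R} (x : X ⟶ V ⊞ V) :
    x ≫ m ≫ biprod.snd = (x ≫ biprod.fst) ≫ (biprod.inl ≫ m ≫ biprod.snd)
      + (x ≫ biprod.snd) ≫ (biprod.inl ≫ m ≫ biprod.fst) := by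
  conv_lhs => rw [← Category.comp_id x, ← biprod.total]
  simp only [Preadditive.comp_add, Preadditive.add_comp, Category.assoc,
    inr_comp_snd_of_commute h]

/- `End V` multiplies in the reverse order of composition, so the first row of `n ≫ m` is the
product `(a + b i) (c + d i)` of the first rows `(a, b)` of `m` and `(c, d)` of `n`. -/
lemma biprodFirstRow_comp_of_commute (h : biprodJ V ≫ m = m ≫ biprodJ V)
    (n : V ⊞ V ⟶ V ⊞ V) :
    biprodFirstRow V (n ≫ m) =
      ((biprodFirstRow V m).1 * (biprodFirstRow V n).1
          - (biprodFirstRow V m).2 * (biprodFirstRow V n).2,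
        (biprodFirstRow V m).1 * (biprodFirstRow V n).2
          + (biprodFirstRow V m).2 * (biprodFirstRow V n).1) := by
  ext
  · simpa [End.mul_def] using comp_fst_of_commute h (biprod.inl ≫ n)
  · simpa [End.mul_def, add_comm] using comp_snd_of_commute h (biprod.inl ≫ n)

lemma eq_map_add_map_comp_biprodJ_of_commute (h : biprodJ V ≫ m = m ≫ biprodJ V) :
    m = biprod.map (biprod.inl ≫ m ≫ biprod.fst) (biprod.inl ≫ m ≫ biprod.fst)
      + biprod.map (biprod.inl ≫ m ≫ biprod.snd) (biprod.inl ≫ m ≫ biprod.snd) ≫ biprodJ V := by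
  apply biprod.hom_ext' <;> apply biprod.hom_ext <;>
    simp [biprodJ, inr_comp_fst_of_commute h, inr_comp_snd_of_commute h]

end Commute

variable (V) in
noncomputable def endAddEquivProd : End ((Efunctor R).obj V) ≃+ End V × End V where
  toFun f := biprodFirstRow V f.1
  invFun p := (Efunctor R).map p.1 + (Efunctor R).map p.2 ≫ iMor _
  left_inv f := CObj.hom_ext (eq_map_add_map_comp_biprodJ_of_commute f.2).symm
  right_inv p := by
    change biprodFirstRow V (biprod.map p.1 p.1 + biprod.map p.2 p.2 ≫ biprodJ V) = p
    simp [biprodJ]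
  map_add' f g := map_add (biprodFirstRow V) f.1 g.1

lemma endAddEquivProd_mul (f g : End ((Efunctor R).obj V)) :
    endAddEquivProd V (f * g) =
      ((endAddEquivProd V f).1 * (endAddEquivProd V g).1
          - (endAddEquivProd V f).2 * (endAddEquivProd V g).2,
        (endAddEquivProd V f).1 * (endAddEquivProd V g).2
          + (endAddEquivProd V f).2 * (endAddEquivProd V g).1) :=
  biprodFirstRow_comp_of_commute f.2 g.1

lemma endAddEquivProd_comp_iMor (f : End ((Efunctor R).obj V)) :
    endAddEquivProd V (f ≫ iMor _) = (-(endAddEquivProd V f).2, (endAddEquivProd V f).1) :=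
  biprodFirstRow_comp_biprodJ f.1

variable (V) in
noncomputable def endRingEquivTensorComplex : End ((Efunctor R).obj V) ≃+* End V ⊗[ℝ] ℂ :=
  { (endAddEquivProd V).trans (prodEquivTensorComplex (End V)).toAddEquiv with
    map_mul' f g := by
      change prodEquivTensorComplex _ (endAddEquivProd V (f * g)) =
        prodEquivTensorComplex _ (endAddEquivProd V f) *
          prodEquivTensorComplex _ (endAddEquivProd V g)
      rw [endAddEquivProd_mul]
      simp only [prodEquivTensorComplex_apply, tmul_one_add_tmul_I_mul] }

lemma endRingEquivTensorComplex_apply (f : End ((Efunctor R).obj V)) :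
    endRingEquivTensorComplex V f = (biprod.inl ≫ f.1 ≫ biprod.fst) ⊗ₜ[ℝ] (1 : ℂ)
      + (biprod.inl ≫ f.1 ≫ biprod.snd) ⊗ₜ[ℝ] Complex.I :=
  prodEquivTensorComplex_apply _ _

lemma endRingEquivTensorComplex_comp_iMor (f : End ((Efunctor R).obj V)) :
    endRingEquivTensorComplex V (f ≫ iMor _) =
      endRingEquivTensorComplex V f * ((𝟙 V : End V) ⊗ₜ[ℝ] Complex.I : End V ⊗[ℝ] ℂ) := by
  change prodEquivTensorComplex _ (endAddEquivProd V (f ≫ iMor _)) =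
    prodEquivTensorComplex _ (endAddEquivProd V f) * _
  have hI : ((𝟙 V : End V) ⊗ₜ[ℝ] Complex.I : End V ⊗[ℝ] ℂ) =
      (0 : End V) ⊗ₜ 1 + (1 : End V) ⊗ₜ Complex.I := by
    simp [End.one_def]
  rw [endAddEquivProd_comp_iMor, hI, prodEquivTensorComplex_apply, prodEquivTensorComplex_apply,
    tmul_one_add_tmul_I_mul]
  simp

end Complexification

variable [EssentiallySmall.{v} R]

theorem statement6
    (V : R) :
    ∃ e : CategoryTheory.End ((Efunctor R).obj V) ≃+* (CategoryTheory.End V) ⊗[ℝ] ℂ,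
      (∀ f : CategoryTheory.End ((Efunctor R).obj V),
          e f = (biprod.inl ≫ f.1 ≫ biprod.fst) ⊗ₜ[ℝ] (1 : ℂ)
              + (biprod.inl ≫ f.1 ≫ biprod.snd) ⊗ₜ[ℝ] Complex.I) ∧
      (∀ f : CategoryTheory.End ((Efunctor R).obj V),
          e (f ≫ iMor ((Efunctor R).obj V)) = e f * (((𝟙 V : CategoryTheory.End V) ⊗ₜ[ℝ] Complex.I : CategoryTheory.End V ⊗[ℝ] ℂ))) :=
  ⟨endRingEquivTensorComplex V, endRingEquivTensorComplex_apply,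
    endRingEquivTensorComplex_comp_iMor⟩
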